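/- arXiv:1709.01792 — 4 statements merged into one kernel-verified Lean document; each statement's English description precedes it below -/
import Mathlib

section
/- Assume q/H < 2/5. If n ≥ 1 is an even integer, then Γ_n(ρ) ≥ 0 for every ρ ∈ ℝ; that is, an even vibrating mode never shortens the cable. -/
open Real MeasureTheory

/-- Cable length increment `Γ_n(ρ)` for the `n`-th vibrating mode with amplitude `ρ`. -/
noncomputable def Gamma (L q H : ℝ) (n : ℕ) (ρ : ℝ) : ℝ :=
  (∫ x in (0:ℝ)..L,
      Real.sqrt (1 + ((q / H) * (x - L / 2) +
        ((n : ℝ) * π / L) * ρ * Real.cos ((n : ℝ) * π * x / L)) ^ 2))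
    - ∫ x in (0:ℝ)..L, Real.sqrt (1 + (q / H) ^ 2 * (x - L / 2) ^ 2)

lemma sqrt_convex_key (a b : ℝ) :
    2 * Real.sqrt (1 + a ^ 2) ≤
      Real.sqrt (1 + (a + b) ^ 2) + Real.sqrt (1 + (a - b) ^ 2) := by
  set s0 := Real.sqrt (1 + a ^ 2) with hs0def
  set s1 := Real.sqrt (1 + (a + b) ^ 2) with hs1def
  set s2 := Real.sqrt (1 + (a - b) ^ 2) with hs2def
  have h0 : s0 ^ 2 = 1 + a ^ 2 := Real.sq_sqrt (by positivity)
  have h1 : s1 ^ 2 = 1 + (a + b) ^ 2 := Real.sq_sqrt (by positivity)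
  have h2 : s2 ^ 2 = 1 + (a - b) ^ 2 := Real.sq_sqrt (by positivity)
  have hn0 : 0 ≤ s0 := Real.sqrt_nonneg _
  have hn1 : 0 ≤ s1 := Real.sqrt_nonneg _
  have hn2 : 0 ≤ s2 := Real.sqrt_nonneg _
  have hprod : 1 + a ^ 2 - b ^ 2 ≤ s1 * s2 := by
    rcases le_or_gt (1 + a ^ 2 - b ^ 2) 0 with h | h
    · exact h.trans (mul_nonneg hn1 hn2)
    · nlinarith [mul_nonneg hn1 hn2, sq_nonneg (s1 * s2 - (1 + a ^ 2 - b ^ 2)),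
        sq_nonneg (s1 * s2 + (1 + a ^ 2 - b ^ 2)), sq_nonneg b]
  nlinarith [sq_nonneg (s1 + s2 - 2 * s0), sq_nonneg (s1 + s2 + 2 * s0),
    mul_nonneg hn1 hn2, mul_nonneg (add_nonneg hn1 hn2) hn0]

/-- If `q/H < 2/5` and `n ≥ 1` is even, then `Γ_n(ρ) ≥ 0` for all `ρ`:
an even vibrating mode never shortens the cable. -/
theorem even_mode_no_shortening (L q H : ℝ) (hL : 0 < L) (hq : 0 < q) (hH : 0 < H)
    (hqH : q / H < 2 / 5) (n : ℕ) (hn : 1 ≤ n) (hne : Even n) (ρ : ℝ) :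
    0 ≤ Gamma L q H n ρ := by
  obtain ⟨m, hm⟩ := hne
  have hL' : (L : ℝ) ≠ 0 := ne_of_gt hL
  set F : ℝ → ℝ := fun x =>
    Real.sqrt (1 + ((q / H) * (x - L / 2) +
      ((n : ℝ) * π / L) * ρ * Real.cos ((n : ℝ) * π * x / L)) ^ 2) with hF
  set G : ℝ → ℝ := fun x => Real.sqrt (1 + (q / H) ^ 2 * (x - L / 2) ^ 2) with hG
  have hcF : Continuous F := by fun_prop
  have hcG : Continuous G := by fun_prop
  have hcos : ∀ x : ℝ, Real.cos ((n : ℝ) * π * (L - x) / L) =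
      Real.cos ((n : ℝ) * π * x / L) := by
    intro x
    have harg : (n : ℝ) * π * (L - x) / L = (m : ℝ) * (2 * π) - (n : ℝ) * π * x / L := by
      field_simp
      rw [hm]
      push_cast
      ring
    rw [harg, Real.cos_sub, Real.cos_nat_mul_two_pi]
    rw [show ((m:ℝ) * (2 * π)) = ((2*m : ℕ) : ℝ) * π by push_cast; ring, Real.sin_nat_mul_pi]
    ring
  have hrefl : ∀ x : ℝ, F (L - x) =
      Real.sqrt (1 + ((q / H) * (x - L / 2) -
        ((n : ℝ) * π / L) * ρ * Real.cos ((n : ℝ) * π * x / L)) ^ 2) := by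
    intro x
    simp only [hF]
    rw [hcos x]
    congr 1
    ring
  have hswap : (∫ x in (0:ℝ)..L, F x) = ∫ x in (0:ℝ)..L, F (L - x) := by
    rw [intervalIntegral.integral_comp_sub_left F L]
    simp
  have hIF : IntervalIntegrable F volume 0 L := hcF.intervalIntegrable 0 L
  have hIF' : IntervalIntegrable (fun x => F (L - x)) volume 0 L :=
    (hcF.comp (by fun_prop)).intervalIntegrable 0 L
  have hIG : IntervalIntegrable G volume 0 L := hcG.intervalIntegrable 0 L
  have hpt : ∀ x ∈ Set.Icc (0:ℝ) L, 2 * G x ≤ F x + F (L - x) := by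
    intro x _
    rw [hrefl x]
    have hGx : G x = Real.sqrt (1 + ((q / H) * (x - L / 2)) ^ 2) := by
      simp only [hG]
      congr 1
      ring
    rw [hGx]
    exact sqrt_convex_key ((q / H) * (x - L / 2)) (((n : ℝ) * π / L) * ρ *
      Real.cos ((n : ℝ) * π * x / L))
  have hmono : (∫ x in (0:ℝ)..L, 2 * G x) ≤ ∫ x in (0:ℝ)..L, (F x + F (L - x)) := by
    apply intervalIntegral.integral_mono_on hL.le (hIG.const_mul 2) (hIF.add hIF') hpt
  have hsum : (∫ x in (0:ℝ)..L, (F x + F (L - x))) =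
      (∫ x in (0:ℝ)..L, F x) + ∫ x in (0:ℝ)..L, F (L - x) :=
    intervalIntegral.integral_add hIF hIF'
  have h2G : (∫ x in (0:ℝ)..L, 2 * G x) = 2 * ∫ x in (0:ℝ)..L, G x :=
    intervalIntegral.integral_const_mul 2 G
  have : (∫ x in (0:ℝ)..L, G x) ≤ ∫ x in (0:ℝ)..L, F x := by
    rw [h2G, hsum, ← hswap] at hmono
    linarith
  simpa [_root_.Gamma, hF, hG, sub_nonneg] using this
end

section
/- For every integer n ≥ 1 and all parameters L > 0, q, H > 0, the map ρ ↦ Γ_n(ρ) is strictly convex on ℝ. -/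
open Real MeasureTheory

/-! For fixed `x`, the integrand of `Γ_n` is the strictly convex function `u ↦ √(1 + u²)` evaluated
at an affine function of `ρ` with slope `(nπ/L) cos(nπx/L)`. It is therefore convex in `ρ` for
every `x`, and strictly convex at `x = 0`, where the slope is `nπ/L ≠ 0`; by continuity in `x`, the
strict inequality at that one point survives integration over `[0, L]`. -/

open Set

/-- `(1 + u²)(1 + v²) = (1 + uv)² + (u - v)²`. -/
theorem one_add_mul_lt_sqrt_mul_sqrt {u v : ℝ} (huv : u ≠ v) :
    1 + u * v < √(1 + u ^ 2) * √(1 + v ^ 2) := by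
  rw [← Real.sqrt_mul (by positivity)]
  apply Real.lt_sqrt_of_sq_lt
  nlinarith [sq_pos_of_ne_zero (sub_ne_zero.2 huv)]

theorem strictConvexOn_sqrt_one_add_sq : StrictConvexOn ℝ univ fun u : ℝ => √(1 + u ^ 2) := by
  refine ⟨convex_univ, fun u _ v _ huv a b ha hb hab => ?_⟩
  have hu := Real.sq_sqrt (show 0 ≤ 1 + u ^ 2 by positivity)
  have hv := Real.sq_sqrt (show 0 ≤ 1 + v ^ 2 by positivity)
  have hgap : (a * √(1 + u ^ 2) + b * √(1 + v ^ 2)) ^ 2 - (1 + (a * u + b * v) ^ 2)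
      = 2 * a * b * (√(1 + u ^ 2) * √(1 + v ^ 2) - (1 + u * v)) := by
    linear_combination a ^ 2 * hu + b ^ 2 * hv + (a + b + 1) * hab
  have hpos := mul_pos (by positivity : (0 : ℝ) < 2 * a * b)
    (sub_pos.2 (one_add_mul_lt_sqrt_mul_sqrt huv))
  simp only [smul_eq_mul]
  rw [Real.sqrt_lt' (by positivity)]
  linarith

theorem ConvexOn.comp_add_mul {g : ℝ → ℝ} (hg : ConvexOn ℝ univ g) (A c : ℝ) :
    ConvexOn ℝ univ fun ρ => g (A + ρ * c) := by
  refine ⟨convex_univ, fun x _ y _ a b ha hb hab => ?_⟩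
  convert hg.2 (mem_univ (A + x * c)) (mem_univ (A + y * c)) ha hb hab using 2
  simp only [smul_eq_mul]
  linear_combination A * hab.symm

theorem StrictConvexOn.comp_add_mul {g : ℝ → ℝ} (hg : StrictConvexOn ℝ univ g) (A : ℝ) {c : ℝ}
    (hc : c ≠ 0) : StrictConvexOn ℝ univ fun ρ => g (A + ρ * c) := by
  refine ⟨convex_univ, fun x _ y _ hxy a b ha hb hab => ?_⟩
  have hne : A + x * c ≠ A + y * c := by simpa [hc] using hxy
  convert hg.2 (mem_univ _) (mem_univ _) hne ha hb hab using 2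
  simp only [smul_eq_mul]
  linear_combination A * hab.symm

theorem strictConvexOn_intervalIntegral {E : Type*} [AddCommGroup E] [Module ℝ E] {s : Set E}
    {F : E → ℝ → ℝ} {a b : ℝ} (hab : a < b) (hF : ∀ ρ ∈ s, ContinuousOn (F ρ) (Icc a b))
    (hconv : ∀ x ∈ Icc a b, ConvexOn ℝ s (F · x))
    (hstrict : ∃ x₀ ∈ Icc a b, StrictConvexOn ℝ s (F · x₀)) :
    StrictConvexOn ℝ s fun ρ => ∫ x in a..b, F ρ x := by
  obtain ⟨x₀, hx₀, hs, hstrict₀⟩ := hstrict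
  refine ⟨hs, fun ρ₁ h₁ ρ₂ h₂ hne t₁ t₂ ht₁ ht₂ ht => ?_⟩
  have hint : ∀ ρ ∈ s, IntervalIntegrable (F ρ) volume a b :=
    fun ρ hρ => (hF ρ hρ).intervalIntegrable_of_Icc hab.le
  have hlt := intervalIntegral.integral_lt_integral_of_continuousOn_of_le_of_exists_lt hab
    (hF _ (hs h₁ h₂ ht₁.le ht₂.le ht))
    (((hF ρ₁ h₁).const_smul t₁).add ((hF ρ₂ h₂).const_smul t₂))
    (fun x hx => (hconv x (Ioc_subset_Icc_self hx)).2 h₁ h₂ ht₁.le ht₂.le ht)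
    ⟨x₀, hx₀, hstrict₀ h₁ h₂ hne ht₁ ht₂ ht⟩
  simp only [Pi.add_apply, Pi.smul_apply, smul_eq_mul] at hlt ⊢
  rwa [intervalIntegral.integral_add ((hint ρ₁ h₁).const_mul t₁) ((hint ρ₂ h₂).const_mul t₂),
    intervalIntegral.integral_const_mul, intervalIntegral.integral_const_mul] at hlt

theorem Gamma_strictConvex_general (L q H : ℝ) (hL : 0 < L)
    (n : ℕ) (hn : 1 ≤ n) :
    StrictConvexOn ℝ Set.univ (fun ρ : ℝ => Gamma L q H n ρ) := by
  let A : ℝ → ℝ := fun x => (q / H) * (x - L / 2)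
  let c : ℝ → ℝ := fun x => (n : ℝ) * π / L * Real.cos ((n : ℝ) * π * x / L)
  have hc₀ : c 0 ≠ 0 := by
    have : (0 : ℝ) < n := by exact_mod_cast hn
    simpa [c] using (by positivity : (n : ℝ) * π / L ≠ 0)
  have hlength : StrictConvexOn ℝ univ fun ρ => ∫ x in (0:ℝ)..L, √(1 + (A x + ρ * c x) ^ 2) :=
    strictConvexOn_intervalIntegral hL (fun ρ _ => by fun_prop)
      (fun x _ => strictConvexOn_sqrt_one_add_sq.convexOn.comp_add_mul (A x) (c x))
      ⟨0, left_mem_Icc.2 hL.le, strictConvexOn_sqrt_one_add_sq.comp_add_mul (A 0) hc₀⟩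
  refine (hlength.add_const (-∫ x in (0:ℝ)..L, √(1 + (q / H) ^ 2 * (x - L / 2) ^ 2))).congr
    fun ρ _ => ?_
  rw [Pi.add_apply, ← sub_eq_add_neg]
  unfold _root_.Gamma
  congr 1
  refine intervalIntegral.integral_congr fun x _ => ?_
  simp only [A, c]
  ring_nf

/-- The map `ρ ↦ Γ_n(ρ)` is strictly convex on `ℝ`. -/
theorem Gamma_strictConvex (L q H : ℝ) (hL : 0 < L) (hq : 0 < q) (hH : 0 < H)
    (n : ℕ) (hn : 1 ≤ n) :
    StrictConvexOn ℝ Set.univ (fun ρ : ℝ => Gamma L q H n ρ) :=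
  Gamma_strictConvex_general L q H hL n hn
end

section
/- Let L > 0, q, H > 0, let n ≥ 1 be an integer and ρ ∈ ℝ, and set z_n(x) = γ + (q/(2H))·x(x − L) + ρ·sin(nπx/L) and C_n* = (q/H)·(L/(nπ))². Then there exists x ∈ (0, L) with z_n''(x) < 0 if and only if either (n = 1 and ρ > C_1*) or (n ≥ 2 and |ρ| > C_n*). -/
/-!
The second derivative of the displaced profile is `q/H - ρ (nπ/L)² sin(nπx/L)`, and
`q/H = C_n* (nπ/L)²`, so the cable slackens somewhere exactly when `ρ sin(nπx/L)` exceeds `C_n*`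
for some `x ∈ (0, L)`. For `n = 1` the sine takes every value in `(0, 1]` on `(0, L)`, so this
needs `ρ > C_1*`; for `n ≥ 2` it takes both values `1` and `-1`, so this needs `|ρ| > C_n*`.
-/

open Real Set

theorem deriv_deriv_quadratic_add_sin (γ a L ρ c x : ℝ) :
    deriv (deriv (fun x : ℝ => γ + a * x * (x - L) + ρ * sin (c * x / L))) x
      = 2 * a - ρ * (c / L) ^ 2 * sin (c * x / L) := by
  have hderiv : deriv (fun x : ℝ => γ + a * x * (x - L) + ρ * sin (c * x / L))
      = fun y => a * (2 * y - L) + ρ * (c / L) * cos (c * y / L) := by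
    funext y
    have h := (((hasDerivAt_id y).const_mul a).mul ((hasDerivAt_id y).sub_const L)).const_add γ
      |>.add ((((hasDerivAt_id y).const_mul c).div_const L).sin.const_mul ρ)
    simp only [id_eq] at h
    exact h.deriv.trans (by ring)
  have h := (((hasDerivAt_id x).const_mul 2).sub_const L).const_mul a
    |>.fun_add ((((hasDerivAt_id x).const_mul c).div_const L).cos.const_mul (ρ * (c / L)))
  simp only [id_eq] at h
  rw [hderiv, h.deriv]
  ring

section SineOnInterval

variable {L : ℝ} {n : ℕ}

theorem sin_pi_mul_div_pos (hL : 0 < L) {x : ℝ} (hx : x ∈ Ioo 0 L) : 0 < sin (π * x / L) := by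
  apply sin_pos_of_pos_of_lt_pi (by have := hx.1; positivity)
  rw [div_lt_iff₀ hL]
  exact mul_lt_mul_of_pos_left hx.2 pi_pos

theorem exists_mem_Ioo_sin_nat_mul_pi_mul_div_eq_one (hL : 0 < L) (hn : 1 ≤ n) :
    ∃ x ∈ Ioo 0 L, sin (n * π * x / L) = 1 := by
  have hn' : (1 : ℝ) ≤ n := by exact_mod_cast hn
  refine ⟨L / (2 * n), ⟨by positivity, (div_lt_iff₀ (by positivity)).2 (by nlinarith)⟩, ?_⟩
  have harg : n * π * (L / (2 * n)) / L = π / 2 := by field_simp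
  rw [harg, sin_pi_div_two]

theorem exists_mem_Ioo_sin_nat_mul_pi_mul_div_eq_neg_one (hL : 0 < L) (hn : 2 ≤ n) :
    ∃ x ∈ Ioo 0 L, sin (n * π * x / L) = -1 := by
  have hn' : (2 : ℝ) ≤ n := by exact_mod_cast hn
  refine ⟨3 * L / (2 * n), ⟨by positivity, (div_lt_iff₀ (by positivity)).2 (by nlinarith)⟩, ?_⟩
  have harg : n * π * (3 * L / (2 * n)) / L = π / 2 + π := by field_simp; ring
  rw [harg, sin_add_pi, sin_pi_div_two]

theorem exists_mem_Ioo_lt_mul_sin_iff (hL : 0 < L) (hn : 1 ≤ n) {C : ℝ} (hC : 0 ≤ C) (ρ : ℝ) :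
    (∃ x ∈ Ioo 0 L, C < ρ * sin (n * π * x / L)) ↔
      (n = 1 ∧ C < ρ) ∨ (2 ≤ n ∧ C < |ρ|) := by
  constructor
  · rintro ⟨x, hx, hlt⟩
    obtain rfl | hn2 := hn.eq_or_lt
    · rw [Nat.cast_one, one_mul] at hlt
      have hpos := sin_pi_mul_div_pos hL hx
      have hle := sin_le_one (π * x / L)
      exact .inl ⟨rfl, by nlinarith⟩
    · have hle : ρ * sin (n * π * x / L) ≤ |ρ| :=
        calc ρ * sin (n * π * x / L) ≤ |ρ| * |sin (n * π * x / L)| := abs_mul ρ _ ▸ le_abs_self _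
          _ ≤ |ρ| := mul_le_of_le_one_right (abs_nonneg ρ) (abs_sin_le_one _)
      exact .inr ⟨hn2, hlt.trans_le hle⟩
  · intro h
    have hρ : C < |ρ| := h.elim (fun h => h.2.trans_le (le_abs_self ρ)) And.right
    rcases le_or_gt 0 ρ with hρ0 | hρ0
    · obtain ⟨x, hx, hsin⟩ := exists_mem_Ioo_sin_nat_mul_pi_mul_div_eq_one hL hn
      exact ⟨x, hx, by rwa [hsin, mul_one, ← abs_of_nonneg hρ0]⟩
    · have hn2 : 2 ≤ n := h.elim (fun h => absurd h.2 (by linarith)) And.left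
      obtain ⟨x, hx, hsin⟩ := exists_mem_Ioo_sin_nat_mul_pi_mul_div_eq_neg_one hL hn2
      exact ⟨x, hx, by rwa [hsin, mul_neg_one, ← abs_of_neg hρ0]⟩

end SineOnInterval

/-- For `z_n(x) = γ + (q/(2H)) x(x − L) + ρ sin(nπx/L)` and
`C_n* = (q/H)(L/(nπ))²`, there is `x ∈ (0, L)` with `z_n''(x) < 0` iff
(`n = 1` and `ρ > C_1*`) or (`n ≥ 2` and `|ρ| > C_n*`). -/
theorem slackening_threshold (L q H γ : ℝ) (hL : 0 < L) (hq : 0 < q) (hH : 0 < H)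
    (n : ℕ) (hn : 1 ≤ n) (ρ : ℝ) :
    (∃ x ∈ Set.Ioo (0:ℝ) L,
        deriv (deriv (fun x : ℝ =>
          γ + (q / (2 * H)) * x * (x - L) + ρ * Real.sin ((n : ℝ) * π * x / L))) x < 0)
      ↔ ((n = 1 ∧ (q / H) * (L / ((n : ℝ) * π)) ^ 2 < ρ) ∨
         (2 ≤ n ∧ (q / H) * (L / ((n : ℝ) * π)) ^ 2 < |ρ|)) := by
  set C := (q / H) * (L / ((n : ℝ) * π)) ^ 2 with hC
  have hn0 : (0 : ℝ) < n := by exact_mod_cast hn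
  have hk : 0 < (n * π / L) ^ 2 := by positivity
  have hCk : 2 * (q / (2 * H)) = (n * π / L) ^ 2 * C := by rw [hC]; field_simp
  have hsign : ∀ s : ℝ, 2 * (q / (2 * H)) - ρ * (n * π / L) ^ 2 * s < 0 ↔ C < ρ * s := by
    intro s
    rw [hCk, show (n * π / L) ^ 2 * C - ρ * (n * π / L) ^ 2 * s = (n * π / L) ^ 2 * (C - ρ * s) by
      ring, ← mul_zero ((n * π / L) ^ 2), mul_lt_mul_iff_right₀ hk, sub_neg]
  rw [← exists_mem_Ioo_lt_mul_sin_iff hL hn (by positivity) ρ]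
  simp only [deriv_deriv_quadratic_add_sin, hsign]
end

section
/- Let a < b be real numbers, let f : ℝ → ℝ be continuous on [a, b], and let x₀ ∈ (a, b) be a point where f is twice differentiable with f''(x₀) < 0. Then every convex function h : [a, b] → ℝ satisfying h(x) ≤ f(x) for all x ∈ [a, b] satisfies h(x₀) < f(x₀). In particular, f(x₀) > f**(x₀), where f** denotes the convexification of f (the pointwise supremum of all convex functions below f on [a, b]). -/
open Real Filter

/-- Let `f` be continuous on `[a, b]` and twice differentiable at `x₀ ∈ (a, b)` with
`f''(x₀) < 0`. Then every convex function `h ≤ f` on `[a, b]` satisfies `h x₀ < f x₀`;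
in particular `f**(x₀) < f(x₀)`, where `f**(x₀)` is the supremum at `x₀` of all
convex functions lying below `f` on `[a, b]`. -/
theorem strict_above_convexification (a b x₀ : ℝ) (hab : a < b) (f : ℝ → ℝ)
    (hf : ContinuousOn f (Set.Icc a b)) (hx₀ : x₀ ∈ Set.Ioo a b)
    (hf1 : ∀ᶠ x in nhds x₀, DifferentiableAt ℝ f x)
    (hf2 : DifferentiableAt ℝ (deriv f) x₀)
    (hneg : deriv (deriv f) x₀ < 0) :
    (∀ h : ℝ → ℝ, ConvexOn ℝ (Set.Icc a b) h →
        (∀ x ∈ Set.Icc a b, h x ≤ f x) → h x₀ < f x₀) ∧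
    sSup {y : ℝ | ∃ h : ℝ → ℝ, ConvexOn ℝ (Set.Icc a b) h ∧
        (∀ x ∈ Set.Icc a b, h x ≤ f x) ∧ h x₀ = y} < f x₀ := by
  obtain ⟨hax, hxb⟩ := hx₀
  set g := deriv f with hg
  obtain ⟨δ₁, hδ₁, hdiff⟩ := Metric.eventually_nhds_iff.mp hf1
  have hslope : Tendsto (slope g x₀) (nhdsWithin x₀ {x₀}ᶜ) (nhds (deriv g x₀)) :=
    hasDerivAt_iff_tendsto_slope.mp hf2.hasDerivAt
  have hev : ∀ᶠ y in nhdsWithin x₀ {x₀}ᶜ, slope g x₀ y < 0 :=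
    hslope.eventually (gt_mem_nhds hneg)
  obtain ⟨ε, hε, hsl⟩ := Metric.eventually_nhds_iff.mp (eventually_nhdsWithin_iff.mp hev)
  -- choose t
  set t : ℝ := min (min (δ₁/2) (ε/2)) (min ((x₀-a)/2) ((b-x₀)/2)) with ht
  have ht0 : 0 < t := by
    simp only [ht, lt_min_iff]
    refine ⟨⟨by linarith, by linarith⟩, by constructor <;> linarith⟩
  have htδ : t < δ₁ := lt_of_le_of_lt (le_trans (min_le_left _ _) (min_le_left _ _)) (by linarith)
  have htε : t < ε := lt_of_le_of_lt (le_trans (min_le_left _ _) (min_le_right _ _)) (by linarith)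
  have hta : a ≤ x₀ - t := by
    have h1 : t ≤ (x₀-a)/2 := (min_le_right _ _).trans (min_le_left _ _)
    linarith
  have htb : x₀ + t ≤ b := by
    have h1 : t ≤ (b-x₀)/2 := (min_le_right _ _).trans (min_le_right _ _)
    linarith
  -- g y < g x₀ for y ∈ (x₀, x₀+t], g y > g x₀ for y ∈ [x₀-t, x₀)
  have hgt : ∀ y, x₀ < y → y ≤ x₀ + t → g y < g x₀ := by
    intro y h1 h2
    have hd : dist y x₀ < ε := by rw [Real.dist_eq, abs_lt]; constructor <;> linarith
    have := hsl hd (by simp; linarith)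
    rw [slope_def_field, div_lt_iff₀ (by linarith : (0:ℝ) < y - x₀)] at this
    linarith
  have hlt : ∀ y, x₀ - t ≤ y → y < x₀ → g x₀ < g y := by
    intro y h1 h2
    have hd : dist y x₀ < ε := by rw [Real.dist_eq, abs_lt]; constructor <;> linarith
    have := hsl hd (by simp; linarith)
    rw [slope_def_field, div_lt_iff_of_neg (by linarith : y - x₀ < 0)] at this
    linarith
  -- MVT on both sides
  have hcont : ∀ x ∈ Set.Icc (x₀ - t) (x₀ + t), ContinuousAt f x := by
    intro x hx
    refine (hdiff ?_).continuousAt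
    rw [Real.dist_eq, abs_lt]
    obtain ⟨h1, h2⟩ := hx
    constructor <;> linarith
  have hderiv : ∀ x ∈ Set.Ioo (x₀ - t) (x₀ + t), HasDerivAt f (g x) x := by
    intro x hx
    refine (hdiff ?_).hasDerivAt
    rw [Real.dist_eq, abs_lt]
    obtain ⟨h1, h2⟩ := hx
    constructor <;> linarith
  have h1 : f (x₀ + t) < f x₀ + t * g x₀ := by
    obtain ⟨c, hc, hceq⟩ := exists_hasDerivAt_eq_slope f g (by linarith : x₀ < x₀ + t)
      (fun x hx => (hcont x ⟨by linarith [hx.1], hx.2⟩).continuousWithinAt)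
      (fun x hx => hderiv x ⟨by linarith [hx.1], hx.2⟩)
    have hgc := hgt c hc.1 (le_of_lt hc.2)
    rw [hceq] at hgc
    rw [div_lt_iff₀ (by linarith : (0:ℝ) < x₀ + t - x₀)] at hgc
    nlinarith
  have h2 : f (x₀ - t) < f x₀ - t * g x₀ := by
    obtain ⟨c, hc, hceq⟩ := exists_hasDerivAt_eq_slope f g (by linarith : x₀ - t < x₀)
      (fun x hx => (hcont x ⟨hx.1, by linarith [hx.2]⟩).continuousWithinAt)
      (fun x hx => hderiv x ⟨hx.1, by linarith [hx.2]⟩)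
    have hgc := hlt c (le_of_lt hc.1) hc.2
    rw [hceq] at hgc
    rw [lt_div_iff₀ (by linarith : (0:ℝ) < x₀ - (x₀ - t))] at hgc
    nlinarith
  have key : f (x₀ - t) + f (x₀ + t) < 2 * f x₀ := by linarith
  have hmem1 : x₀ - t ∈ Set.Icc a b := ⟨hta, by linarith⟩
  have hmem2 : x₀ + t ∈ Set.Icc a b := ⟨by linarith, htb⟩
  have main : ∀ h : ℝ → ℝ, ConvexOn ℝ (Set.Icc a b) h →
      (∀ x ∈ Set.Icc a b, h x ≤ f x) → h x₀ ≤ (f (x₀ - t) + f (x₀ + t)) / 2 := by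
    intro h hconv hle
    have := hconv.2 hmem1 hmem2 (by norm_num : (0:ℝ) ≤ 1/2) (by norm_num : (0:ℝ) ≤ 1/2)
      (by norm_num)
    have hx : (1/2 : ℝ) • (x₀ - t) + (1/2 : ℝ) • (x₀ + t) = x₀ := by
      simp [smul_eq_mul]; ring
    rw [hx] at this
    have l1 := hle _ hmem1
    have l2 := hle _ hmem2
    simp only [smul_eq_mul] at this
    linarith
  constructor
  · intro h hconv hle
    exact lt_of_le_of_lt (main h hconv hle) (by linarith)
  · refine lt_of_le_of_lt (csSup_le ?_ ?_) (show (f (x₀ - t) + f (x₀ + t)) / 2 < f x₀ by linarith)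
    · refine ⟨sInf (f '' Set.Icc a b), fun _ => sInf (f '' Set.Icc a b),
        convexOn_const _ (convex_Icc a b), fun x hx => ?_, rfl⟩
      exact csInf_le (isCompact_Icc.image_of_continuousOn hf).bddBelow ⟨x, hx, rfl⟩
    · rintro y ⟨h, hconv, hle, rfl⟩
      exact main h hconv hle
end
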